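/- Let R be an integral domain with field of fractions F, and let M be a finitely generated module over the Laurent polynomial ring R[t,t⁻¹]. Then M is a torsion R[t,t⁻¹]-module if and only if F ⊗_R M is a torsion F[t,t⁻¹]-module. -/

import Mathlib

/-!
Since `F[t,t⁻¹] = F ⊗_R R[t,t⁻¹]` and `F` is the localization of `R` at its non-zero-divisors,
`F[t,t⁻¹]` is the localization of `R[t,t⁻¹]` at the constants `C s`, `s ∈ R⁰`. Hence
`F[t,t⁻¹] ⊗ M` is the localization of `M` at a submonoid of non-zero-divisors. Such a
localization preserves torsion (`a • m = 0` gives `a • (m / s) = 0`) and reflects it: if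
`(a / s) • m = 0` in the localization then `u * a` kills `m` for some `u` in the submonoid, and
`a` is a non-zero-divisor because `a / s` is one.
-/

open LaurentPolynomial
open scoped nonZeroDivisors

theorem IsLocalization.le_nonZeroDivisors_of_injective {R S : Type*} [CommRing R] [CommRing S]
    [Algebra R S] (M : Submonoid R) [IsLocalization M S]
    (h : Function.Injective (algebraMap R S)) : M ≤ R⁰ :=
  fun m hm ↦
    isRegular_iff_mem_nonZeroDivisors.mp ((injective_iff_isRegular M (S := S)).mp h ⟨m, hm⟩)

namespace AddMonoidAlgebra

theorem isLocalization_of_algebraMap_eq {R A G : Type*} [CommSemiring R]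
    [CommSemiring A] [Algebra R A] [AddCommMonoid G] (S : Submonoid R) [IsLocalization S A]
    [Algebra R[G] A[G]] (h : algebraMap R[G] A[G] = mapRingHom G (algebraMap R A)) :
    IsLocalization (S.map (algebraMap R R[G])) A[G] := by
  have : IsScalarTower R R[G] A[G] := .of_algebraMap_eq fun r ↦ by
    rw [h]; ext; simp
  refine isLocalizedModule_iff_isLocalization.mp <|
    (isLocalizedModule_iff_isBaseChange S A _).mpr <|
      .of_equiv (scalarTensorEquiv R A).toLinearEquiv fun p ↦ ?_
  ext
  simp [h]

end AddMonoidAlgebra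

theorem LaurentPolynomial.ringHom_ext {R S : Type*} [Semiring R] [Semiring S]
    {f g : R[T;T⁻¹] →+* S} (hC : ∀ r, f (C r) = g (C r)) (hT : ∀ n, f (T n) = g (T n)) :
    f = g :=
  AddMonoidAlgebra.ringHom_ext hC hT

namespace Module

theorem isTorsion_iff_of_isLocalizedModule {S A M N : Type*} [CommRing S] [CommRing A]
    [Algebra S A] {T : Submonoid S} (hT : T ≤ S⁰) [IsLocalization T A]
    [AddCommGroup M] [Module S M] [AddCommGroup N] [Module S N] [Module A N]
    [IsScalarTower S A N] (f : M →ₗ[S] N) [IsLocalizedModule T f] :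
    IsTorsion S M ↔ IsTorsion A N := by
  constructor
  · intro hM n
    obtain ⟨⟨m, t⟩, rfl⟩ := IsLocalizedModule.mk'_surjective T f n
    obtain ⟨a, ha⟩ := @hM m
    refine ⟨⟨algebraMap S A a, IsLocalization.map_nonZeroDivisors_le T A ⟨a, a.2, rfl⟩⟩, ?_⟩
    change algebraMap S A a • IsLocalizedModule.mk' f m t = 0
    rw [algebraMap_smul, ← IsLocalizedModule.mk'_smul, ← Submonoid.smul_def, ha,
      IsLocalizedModule.mk'_zero]
  · intro hN m
    obtain ⟨q, hq⟩ := @hN (f m)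
    obtain ⟨⟨a, t⟩, hat⟩ := IsLocalization.mk'_surjective T (q : A)
    have hq_a : algebraMap S A a = q * algebraMap S A t := by
      rw [← IsLocalization.mk'_spec A a t, ← hat]
    have ha : a ∈ S⁰ := comap_nonZeroDivisors_le_of_injective (IsLocalization.injective A hT) <| by
      rw [Submonoid.mem_comap, hq_a]
      exact mul_mem q.2 (IsLocalization.map_units A t).mem_nonZeroDivisors
    have hfa : f (a • m) = 0 := by
      rw [map_smul, ← algebraMap_smul A, hq_a, mul_comm, mul_smul, ← Submonoid.smul_def, hq,
        smul_zero]
    obtain ⟨u, hu⟩ := (IsLocalizedModule.eq_zero_iff T f).1 hfa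
    exact ⟨⟨u * a, mul_mem (hT u.2) ha⟩, by rwa [Submonoid.smul_def, mul_smul]⟩

theorem isTorsion_iff_isTorsion_tensorProduct {S A M : Type*} [CommRing S] [CommRing A]
    [Algebra S A] {T : Submonoid S} (hT : T ≤ S⁰) [IsLocalization T A]
    [AddCommGroup M] [Module S M] :
    IsTorsion S M ↔ IsTorsion A (TensorProduct S A M) :=
  have : IsLocalizedModule T (TensorProduct.mk S A M 1) :=
    (isLocalizedModule_iff_isBaseChange T A _).mpr (TensorProduct.isBaseChange S M A)
  isTorsion_iff_of_isLocalizedModule hT (TensorProduct.mk S A M 1)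

end Module

theorem stmt0_general (R : Type*) [CommRing R]
    [Algebra (LaurentPolynomial R) (LaurentPolynomial (FractionRing R))]
    (hC : ∀ r : R, algebraMap (LaurentPolynomial R) (LaurentPolynomial (FractionRing R))
        (LaurentPolynomial.C r) = LaurentPolynomial.C (algebraMap R (FractionRing R) r))
    (hT : ∀ n : ℤ, algebraMap (LaurentPolynomial R) (LaurentPolynomial (FractionRing R))
        (LaurentPolynomial.T n) = LaurentPolynomial.T n)
    (M : Type*) [AddCommGroup M] [Module (LaurentPolynomial R) M] :
    Module.IsTorsion (LaurentPolynomial R) M ↔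
      Module.IsTorsion (LaurentPolynomial (FractionRing R))
        (TensorProduct (LaurentPolynomial R) (LaurentPolynomial (FractionRing R)) M) := by
  have hmap : algebraMap R[T;T⁻¹] (FractionRing R)[T;T⁻¹] =
      AddMonoidAlgebra.mapRingHom ℤ (algebraMap R (FractionRing R)) :=
    ringHom_ext (fun r ↦ by rw [hC]; exact (AddMonoidAlgebra.mapRingHom_single ..).symm)
      (fun n ↦ by rw [hT]; simp only [T, AddMonoidAlgebra.mapRingHom_single, map_one])
  have := AddMonoidAlgebra.isLocalization_of_algebraMap_eq R⁰ hmap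
  have hinj : Function.Injective (algebraMap R[T;T⁻¹] (FractionRing R)[T;T⁻¹]) :=
    hmap ▸ AddMonoidAlgebra.map_injective _ (IsFractionRing.injective R (FractionRing R))
  exact Module.isTorsion_iff_isTorsion_tensorProduct
    (IsLocalization.le_nonZeroDivisors_of_injective (R⁰.map (algebraMap R R[T;T⁻¹])) hinj)

/-- Let `R` be an integral domain with field of fractions `F`, and `M` a finitely
generated module over the Laurent polynomial ring `R[t,t⁻¹]`.  Then `M` is a torsion
`R[t,t⁻¹]`-module iff the base change `F[t,t⁻¹] ⊗ M` (which is `F ⊗_R M`) is a torsion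
`F[t,t⁻¹]`-module. -/
theorem stmt0 (R : Type*) [CommRing R] [IsDomain R]
    [Algebra (LaurentPolynomial R) (LaurentPolynomial (FractionRing R))]
    (hC : ∀ r : R, algebraMap (LaurentPolynomial R) (LaurentPolynomial (FractionRing R))
        (LaurentPolynomial.C r) = LaurentPolynomial.C (algebraMap R (FractionRing R) r))
    (hT : ∀ n : ℤ, algebraMap (LaurentPolynomial R) (LaurentPolynomial (FractionRing R))
        (LaurentPolynomial.T n) = LaurentPolynomial.T n)
    (M : Type*) [AddCommGroup M] [Module (LaurentPolynomial R) M]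
    [Module.Finite (LaurentPolynomial R) M] :
    Module.IsTorsion (LaurentPolynomial R) M ↔
      Module.IsTorsion (LaurentPolynomial (FractionRing R))
        (TensorProduct (LaurentPolynomial R) (LaurentPolynomial (FractionRing R)) M) :=
  stmt0_general R hC hT M
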